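/- arXiv:1801.02347 — 6 statements merged into one kernel-verified Lean document; each statement's English description precedes it below -/
import Mathlib

section
/- Let H be a finite group acting on finite sets A and B such that the diagonal action of H on A × B is transitive, and let F be a field with char(F) ∤ |H|. Then the trivial representation is the only irreducible F-representation of H occurring in both F[A] and F[B]. -/
/-!
An `F[H]`-linear map `F[A] → F[B]` is an `H`-invariant matrix indexed by `A × B`; transitivity
of `H` on `A × B` forces all its entries to be equal, so every vector in its image is a constant
function on `B` and hence `H`-fixed. If `V` occurs in both `F[A]` and `F[B]`, Maschke's theorem
gives an `H`-equivariant retraction `F[A] → V`, and composing it with `V ↪ F[B]` yields such a map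
whose image contains a copy of `V`.
-/

open MonoidAlgebra

namespace Representation

variable {k G A B : Type*} [Group G] [MulAction G A] [MulAction G B]
  [MulAction.IsPretransitive G (A × B)]

theorem IntertwiningMap.coeff_ofMulAction_eq [Semiring k]
    (f : (ofMulAction k G A).IntertwiningMap (ofMulAction k G B)) (x : k[A]) (b b' : B) :
    (f x).coeff b = (f x).coeff b' := by
  induction x using MonoidAlgebra.induction_linear with
  | zero => simp
  | add x y hx hy => simp only [map_add, coeff_add, Finsupp.add_apply, hx, hy]
  | single a r =>
    obtain ⟨g, hg⟩ := MulAction.exists_smul_eq G ((a, b') : A × B) (a, b)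
    obtain ⟨ha, hb⟩ : g • a = a ∧ g • b' = b := Prod.ext_iff.mp hg
    calc (f (single a r)).coeff b
        = (f (ofMulAction k G A g (single a r))).coeff (g • b') := by
          rw [ofMulAction_single, ha, hb]
      _ = (f (single a r)).coeff b' := by
          rw [f.isIntertwining, coeff_ofMulAction, inv_smul_smul]

theorem IntertwiningMap.ofMulAction_apply_eq [Semiring k]
    (f : (ofMulAction k G A).IntertwiningMap (ofMulAction k G B)) (g : G) (x : k[A]) :
    ofMulAction k G B g (f x) = f x := by
  ext b
  rw [coeff_ofMulAction]
  exact f.coeff_ofMulAction_eq x _ _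

theorem of_smul_linearMap_ofMulAction_asModule [CommSemiring k]
    (φ : (ofMulAction k G A).asModule →ₗ[k[G]] (ofMulAction k G B).asModule)
    (g : G) (x : (ofMulAction k G A).asModule) :
    MonoidAlgebra.of k G g • φ x = φ x := by
  rw [of_apply, single_smul, one_smul]
  exact ((IntertwiningMap.equivLinearMapAsModule _ _).symm φ).ofMulAction_apply_eq g x

theorem of_smul_eq_self_of_injective_ofMulAction_asModule [Field k] [Finite G]
    [NeZero (Nat.card G : k)] {V : Type*} [AddCommGroup V] [Module k[G] V]
    (i : V →ₗ[k[G]] (ofMulAction k G A).asModule) (hi : Function.Injective i)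
    (j : V →ₗ[k[G]] (ofMulAction k G B).asModule) (hj : Function.Injective j) (g : G) (v : V) :
    MonoidAlgebra.of k G g • v = v := by
  obtain ⟨p, hp⟩ := exists_leftInverse_of_injective i (LinearMap.ker_eq_bot_of_injective hi)
  have hpi : p (i v) = v := LinearMap.congr_fun hp v
  apply hj
  calc j (MonoidAlgebra.of k G g • v) = MonoidAlgebra.of k G g • (j ∘ₗ p) (i v) := by
        rw [map_smul, LinearMap.comp_apply, hpi]
    _ = j v := by
        rw [of_smul_linearMap_ofMulAction_asModule, LinearMap.comp_apply, hpi]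

end Representation

theorem stmt_1_general (H A B F : Type) [Group H] [Fintype H]
    [MulAction H A] [MulAction H B] [Field F]
    (hchar : ¬ (ringChar F ∣ Fintype.card H))
    (htrans : MulAction.IsPretransitive H (A × B))
    (V : Type) [AddCommGroup V] [Module (MonoidAlgebra F H) V]
    (hA : ∃ W : Submodule (MonoidAlgebra F H) (Representation.ofMulAction F H A).asModule,
      Nonempty (V ≃ₗ[MonoidAlgebra F H] W))
    (hB : ∃ W : Submodule (MonoidAlgebra F H) (Representation.ofMulAction F H B).asModule,
      Nonempty (V ≃ₗ[MonoidAlgebra F H] W)) :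
    ∀ (h : H) (v : V), (MonoidAlgebra.of F H h) • v = v := by
  obtain ⟨WA, ⟨eA⟩⟩ := hA
  obtain ⟨WB, ⟨eB⟩⟩ := hB
  have : NeZero (Nat.card H : F) :=
    ⟨by rw [Nat.card_eq_fintype_card, Ne, ringChar.spec]; exact hchar⟩
  exact Representation.of_smul_eq_self_of_injective_ofMulAction_asModule
    (WA.subtype ∘ₗ eA.toLinearMap) (WA.injective_subtype.comp eA.injective)
    (WB.subtype ∘ₗ eB.toLinearMap) (WB.injective_subtype.comp eB.injective)

/-- If a finite group `H` acts on finite sets `A` and `B` with transitive diagonal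
action on `A × B`, and `char F ∤ |H|`, then the trivial representation is the only
irreducible `F`-representation of `H` occurring in both permutation modules
`F[A]` and `F[B]`. -/
theorem stmt_1 (H A B F : Type) [Group H] [Fintype H] [Fintype A] [Fintype B]
    [MulAction H A] [MulAction H B] [Field F]
    (hchar : ¬ (ringChar F ∣ Fintype.card H))
    (htrans : MulAction.IsPretransitive H (A × B))
    (V : Type) [AddCommGroup V] [Module (MonoidAlgebra F H) V]
    (hsimple : IsSimpleModule (MonoidAlgebra F H) V)
    (hA : ∃ W : Submodule (MonoidAlgebra F H) (Representation.ofMulAction F H A).asModule,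
      Nonempty (V ≃ₗ[MonoidAlgebra F H] W))
    (hB : ∃ W : Submodule (MonoidAlgebra F H) (Representation.ofMulAction F H B).asModule,
      Nonempty (V ≃ₗ[MonoidAlgebra F H] W)) :
    ∀ (h : H) (v : V), (MonoidAlgebra.of F H h) • v = v :=
  stmt_1_general H A B F hchar htrans V hA hB
end

section
/- Let G be a group acting on a spherically symmetric rooted tree T by root-preserving automorphisms. If G acts distance transitively on T (i.e., for every n and all vertices u₁,u₂,v₁,v₂ in level L_n with d(u₁,u₂) = d(v₁,v₂) there is g ∈ G with g u_i = v_i), then G acts locally 2-transitively on T. -/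
/-- Vertices of level `n` of the spherically symmetric rooted tree on `(X i)`. -/
abbrev Vert (X : ℕ → Type) (n : ℕ) := ∀ i : Fin n, X i.val

/-- The predecessor (parent) of a vertex of level `n+1`. -/
def pred {X : ℕ → Type} {n : ℕ} (v : Vert X (n + 1)) : Vert X n :=
  fun i => v i.castSucc

/-- A (root-preserving) action of `G` on the tree: compatible actions on all levels. -/
structure TreeAction (X : ℕ → Type) (G : Type) [Group G] where
  ρ : ∀ n : ℕ, G →* Equiv.Perm (Vert X n)
  compat : ∀ (n : ℕ) (g : G) (v : Vert X (n + 1)), pred (ρ (n + 1) g v) = ρ n g (pred v)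

variable {X : ℕ → Type} {G : Type} [Group G]

/-- Spherically transitive action. -/
def SphTrans (A : TreeAction X G) : Prop := ∀ (n : ℕ) (u v : Vert X n), ∃ g : G, A.ρ n g u = v

/-- Locally 2-transitive action. -/
def LocTwoTrans (A : TreeAction X G) : Prop :=
  SphTrans A ∧ ∀ (n : ℕ) (u v : Vert X n), u ≠ v →
    ∀ u₁ u₂ v₁ v₂ : Vert X (n + 1), pred u₁ = u → pred u₂ = u → pred v₁ = v → pred v₂ = v →
      ∃ g : G, A.ρ n g u = u ∧ A.ρ n g v = v ∧ A.ρ (n + 1) g u₁ = u₂ ∧ A.ρ (n + 1) g v₁ = v₂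

variable [∀ i, DecidableEq (X i)]

/-- Length of the longest common prefix of two vertices of level `n`. -/
def cpl {n : ℕ} (u v : Vert X n) : ℕ :=
  Nat.findGreatest (fun k => ∀ i : Fin n, (i : ℕ) < k → u i = v i) n

/-- The shortest-path distance between two vertices of level `n`. -/
def tdist {n : ℕ} (u v : Vert X n) : ℕ := 2 * (n - cpl u v)

/-! Distance transitivity on a level already gives spherical transitivity (take
`u₁ = u₂`, `v₁ = v₂`). For local 2-transitivity, if the parents of `u₁, v₁` and of
`u₂, v₂` are the same two distinct vertices `u ≠ v`, the common prefix of `u₁, v₁` is that of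
`u, v`, and so is that of `u₂, v₂`; hence `d(u₁, v₁) = d(u₂, v₂)`, and an element mapping
`(u₁, v₁)` to `(u₂, v₂)` fixes their parents `u` and `v`. -/

theorem Nat.findGreatest_congr {P Q : ℕ → Prop} [DecidablePred P] [DecidablePred Q] {n : ℕ}
    (h : ∀ k ≤ n, (P k ↔ Q k)) : Nat.findGreatest P n = Nat.findGreatest Q n := by
  induction n with
  | zero => rfl
  | succ m ih =>
    rw [Nat.findGreatest_succ, Nat.findGreatest_succ, ih fun k hk => h k (Nat.le_succ_of_le hk)]
    exact if_congr (h _ le_rfl) rfl rfl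

theorem cpl_self {n : ℕ} (u : Vert X n) : cpl u u = n :=
  Nat.findGreatest_eq fun _ _ => rfl

theorem tdist_self {n : ℕ} (u : Vert X n) : tdist u u = 0 := by
  simp [tdist, cpl_self]

theorem cpl_eq_cpl_pred_of_pred_ne {n : ℕ} {a b : Vert X (n + 1)} (h : pred a ≠ pred b) :
    cpl a b = cpl (pred a) (pred b) := by
  have hdiff : ¬ ∀ i : Fin (n + 1), (i : ℕ) < n + 1 → a i = b i := fun hall =>
    h (funext fun i => hall i.castSucc (by simp))
  rw [cpl, Nat.findGreatest_of_not hdiff]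
  refine Nat.findGreatest_congr fun k hk => ⟨fun hall i hi => hall i.castSucc hi, ?_⟩
  intro hall i hi
  exact hall ⟨i, hi.trans_le hk⟩ hi

theorem tdist_eq_of_pred_eq {n : ℕ} {a b a' b' : Vert X (n + 1)} (ha : pred a = pred a')
    (hb : pred b = pred b') (hab : pred a ≠ pred b) : tdist a b = tdist a' b' := by
  have hab' : pred a' ≠ pred b' := ha ▸ hb ▸ hab
  rw [tdist, tdist, cpl_eq_cpl_pred_of_pred_ne hab, cpl_eq_cpl_pred_of_pred_ne hab', ha, hb]

omit [∀ i, DecidableEq (X i)] in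
theorem TreeAction.map_pred_of_map_eq (A : TreeAction X G) {n : ℕ} {g : G}
    {a b : Vert X (n + 1)} (h : A.ρ (n + 1) g a = b) : A.ρ n g (pred a) = pred b := by
  rw [← A.compat, h]

theorem stmt_4_general {X : ℕ → Type} {G : Type} [Group G] [∀ i, DecidableEq (X i)]
    (A : TreeAction X G)
    (hdist : ∀ (n : ℕ) (u₁ u₂ v₁ v₂ : Vert X n), tdist u₁ u₂ = tdist v₁ v₂ →
      ∃ g : G, A.ρ n g u₁ = v₁ ∧ A.ρ n g u₂ = v₂) :
    LocTwoTrans A := by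
  refine ⟨fun n u v => ?_, ?_⟩
  · obtain ⟨g, hg, -⟩ := hdist n u u v v (by rw [tdist_self, tdist_self])
    exact ⟨g, hg⟩
  · rintro n u v huv u₁ u₂ v₁ v₂ rfl hu₂ rfl hv₂
    obtain ⟨g, hgu, hgv⟩ :=
      hdist (n + 1) u₁ v₁ u₂ v₂ (tdist_eq_of_pred_eq hu₂.symm hv₂.symm huv)
    exact ⟨g, (A.map_pred_of_map_eq hgu).trans hu₂, (A.map_pred_of_map_eq hgv).trans hv₂,
      hgu, hgv⟩

/-- Distance-transitive actions on a spherically symmetric rooted tree are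
locally 2-transitive. -/
theorem stmt_4 {X : ℕ → Type} {G : Type} [Group G] [∀ i, DecidableEq (X i)]
    [∀ i, Fintype (X i)] (hcard : ∀ i, 2 ≤ Fintype.card (X i))
    (A : TreeAction X G)
    (hdist : ∀ (n : ℕ) (u₁ u₂ v₁ v₂ : Vert X n), tdist u₁ u₂ = tdist v₁ v₂ →
      ∃ g : G, A.ρ n g u₁ = v₁ ∧ A.ρ n g u₂ = v₂) :
    LocTwoTrans A :=
  stmt_4_general A hdist
end

section
/- Let H be a finite group with |H| ≥ 3, acting on itself by left multiplication, and let G_C = … H ≀ H ≀ H be the corresponding iterated wreath product acting on the |H|-regular rooted tree T. Then G_C does not act distance transitively on T. -/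
variable {X : ℕ → Type} {G : Type} [Group G]

variable [∀ i, DecidableEq (X i)]

/-- Membership in the iterated wreath product `… H ≀ H ≀ H` of a finite group `H`
acting on itself by left multiplication: `f` is a root-preserving automorphism of
the `|H|`-regular rooted tree all of whose labels are left translations by
elements of `H`. -/
def InGCReg (H : Type) [Group H] (f : ∀ m : ℕ, Equiv.Perm (Vert (fun _ => H) m)) : Prop :=
  (∀ (n : ℕ) (v : Vert (fun _ => H) (n + 1)), pred (f (n + 1) v) = f n (pred v)) ∧
  ∀ (n : ℕ) (u : Vert (fun _ => H) n), ∃ h : H,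
    ∀ x : H, f (n + 1) (Fin.snoc u x) = Fin.snoc (f n u) (h * x)

/-!
A tree automorphism with all labels in the left regular image of `H` acts on the first level
by a single left translation `x ↦ h * x`. Since left multiplication is free, fixing one vertex
of the first level forces `h = 1`, so the stabiliser of `(x)` cannot move `(y)` to `(z)`, although
both pairs are at distance `2` once `x, y, z` are distinct.
-/

theorem cpl_eq_zero_of_apply_zero_ne {n : ℕ} {u v : Vert X (n + 1)} (h : u 0 ≠ v 0) :
    cpl u v = 0 :=
  Nat.findGreatest_eq_zero_iff.mpr fun _ hk _ hP => h (hP 0 hk)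

theorem tdist_eq_of_apply_zero_ne {n : ℕ} {u v : Vert X (n + 1)} (h : u 0 ≠ v 0) :
    tdist u v = 2 * (n + 1) := by
  rw [tdist, cpl_eq_zero_of_apply_zero_ne h, Nat.sub_zero]

namespace InGCReg

variable {H : Type} [Group H] {f : ∀ m : ℕ, Equiv.Perm (Vert (fun _ => H) m)}

theorem exists_apply_one_eq_mul (hf : InGCReg H f) :
    ∃ h : H, ∀ w : Vert (fun _ => H) 1, f 1 w 0 = h * w 0 := by
  obtain ⟨h, hh⟩ := hf.2 0 Fin.elim0
  refine ⟨h, fun w => ?_⟩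
  have hw : w = Fin.snoc Fin.elim0 (w (Fin.last 0)) :=
    (Fin.snoc_init_self w).symm.trans (congrArg (Fin.snoc · _) (Subsingleton.elim _ _))
  rw [hw, hh]
  exact Fin.snoc_last (α := fun _ => H) _ _

theorem apply_one_eq_self_of_apply_one_eq_self (hf : InGCReg H f)
    {u : Vert (fun _ => H) 1} (hu : f 1 u = u) (w : Vert (fun _ => H) 1) : f 1 w = w := by
  obtain ⟨h, hh⟩ := hf.exists_apply_one_eq_mul
  have h_one : h = 1 := mul_eq_right.mp ((hh u).symm.trans (congrFun hu 0))
  funext i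
  rw [Subsingleton.elim i 0, hh, h_one, one_mul]

end InGCReg

/-- For `|H| ≥ 3`, the iterated wreath product `… H ≀ H ≀ H` does not act distance
transitively on the `|H|`-regular rooted tree. -/
theorem stmt_7 (H : Type) [Group H] [Fintype H] [DecidableEq H]
    (hH : 3 ≤ Fintype.card H) :
    ¬ (∀ (n : ℕ) (u₁ u₂ v₁ v₂ : Vert (fun _ => H) n), tdist u₁ u₂ = tdist v₁ v₂ →
        ∃ f, InGCReg H f ∧ f n u₁ = v₁ ∧ f n u₂ = v₂) := by
  intro hDT
  obtain ⟨x, y, z, hxy, hxz, hyz⟩ := Fintype.two_lt_card_iff.mp hH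
  let vert (a : H) : Vert (fun _ => H) 1 := fun _ => a
  obtain ⟨f, hf, hfx, hfy⟩ := hDT 1 (vert x) (vert y) (vert x) (vert z) <| by
    rw [tdist_eq_of_apply_zero_ne hxy, tdist_eq_of_apply_zero_ne hxz]
  have hfy' : vert y = vert z := (hf.apply_one_eq_self_of_apply_one_eq_self hfx _).symm.trans hfy
  exact hyz (congrFun hfy' 0)
end

section
/- Let G ≤ Aut(T) act spherically transitively on a spherically symmetric rooted tree T, and fix a vertex u_n ∈ L_n for each n ≥ 0. Then G acts locally 2-transitively on T if and only if for every n ≥ 1 and every v ∈ L_n with u_{n+1} ∉ D(v), the group St_G(u_{n+1}) ∩ St_G(v) acts transitively on D(v). -/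
variable {X : ℕ → Type} {G : Type} [Group G]

variable [∀ i, DecidableEq (X i)]

/-! Conjugating by an element that sends `x` to `u (n + 1)` transports the hypothesis from
`u (n + 1)` to every vertex `x` of level `n + 1`. Then, for `a ≠ b` of level `n` with children
`u₁, u₂` and `v₁, v₂`, an element fixing `u₁` and `b` with `v₁ ↦ v₂`, followed by one fixing `v₂`
and `a` with `u₁ ↦ u₂`, fixes `a` and `b` and moves `u₁ ↦ u₂`, `v₁ ↦ v₂`. -/

namespace TreeAction

variable {X : ℕ → Type} {G : Type} [Group G] (A : TreeAction X G)

def StabTransOnChildren {n : ℕ} (x : Vert X (n + 1)) (v : Vert X n) : Prop :=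
  ∀ w₁ w₂ : Vert X (n + 1), pred w₁ = v → pred w₂ = v →
    ∃ g : G, A.ρ (n + 1) g x = x ∧ A.ρ n g v = v ∧ A.ρ (n + 1) g w₁ = w₂

theorem ρ_conj_apply (n : ℕ) (h g : G) (x : Vert X n) :
    A.ρ n (h⁻¹ * g * h) x = (A.ρ n h).symm (A.ρ n g (A.ρ n h x)) := by
  simp only [map_mul, map_inv, Equiv.Perm.mul_apply, Equiv.Perm.inv_def]

theorem ρ_pred_eq_of_ρ_eq {n : ℕ} {g : G} {x : Vert X (n + 1)} (hx : A.ρ (n + 1) g x = x) :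
    A.ρ n g (pred x) = pred x := by
  rw [← A.compat, hx]

variable {A}

theorem StabTransOnChildren.of_ρ {n : ℕ} {x : Vert X (n + 1)} {v : Vert X n} (h : G)
    (hst : A.StabTransOnChildren (A.ρ (n + 1) h x) (A.ρ n h v)) : A.StabTransOnChildren x v := by
  intro w₁ w₂ hw₁ hw₂
  obtain ⟨g, hgx, hgv, hgw⟩ :=
    hst (A.ρ (n + 1) h w₁) (A.ρ (n + 1) h w₂) (by rw [A.compat, hw₁]) (by rw [A.compat, hw₂])
  refine ⟨h⁻¹ * g * h, ?_, ?_, ?_⟩ <;>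
    simp only [ρ_conj_apply, hgx, hgv, hgw, Equiv.symm_apply_apply]

theorem stabTransOnChildren_of_sphTrans {u : ∀ n : ℕ, Vert X n} (hsph : SphTrans A) {n : ℕ}
    (hu : ∀ v : Vert X n, pred (u (n + 1)) ≠ v → A.StabTransOnChildren (u (n + 1)) v)
    {x : Vert X (n + 1)} {v : Vert X n} (hxv : pred x ≠ v) : A.StabTransOnChildren x v := by
  obtain ⟨h, hh⟩ := hsph (n + 1) x (u (n + 1))
  refine StabTransOnChildren.of_ρ h (hh ▸ hu _ ?_)
  rw [← hh, A.compat]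
  exact fun heq => hxv ((A.ρ n h).injective heq)

theorem locTwoTrans_of_stabTransOnChildren (hsph : SphTrans A)
    (hst : ∀ n, 1 ≤ n → ∀ (x : Vert X (n + 1)) (v : Vert X n), pred x ≠ v →
      A.StabTransOnChildren x v) :
    LocTwoTrans A := by
  refine ⟨hsph, fun n a b hab u₁ u₂ v₁ v₂ hu₁ hu₂ hv₁ hv₂ => ?_⟩
  obtain _ | n := n
  · exact absurd (Subsingleton.elim a b) hab
  have hst := hst (n + 1) (Nat.le_add_left 1 n)
  obtain ⟨g₁, hg₁u₁, hg₁b, hg₁v₁⟩ := hst u₁ b (hu₁ ▸ hab) v₁ v₂ hv₁ hv₂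
  obtain ⟨g₂, hg₂v₂, hg₂a, hg₂u₁⟩ := hst v₂ a (hv₂ ▸ hab.symm) u₁ u₂ hu₁ hu₂
  have hg₁a : A.ρ _ g₁ a = a := hu₁ ▸ A.ρ_pred_eq_of_ρ_eq hg₁u₁
  have hg₂b : A.ρ _ g₂ b = b := hv₂ ▸ A.ρ_pred_eq_of_ρ_eq hg₂v₂
  refine ⟨g₂ * g₁, ?_, ?_, ?_, ?_⟩ <;>
    simp only [map_mul, Equiv.Perm.mul_apply, hg₁a, hg₂a, hg₁b, hg₂b, hg₁u₁, hg₂u₁, hg₁v₁, hg₂v₂]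

end TreeAction

/-- Criterion for local 2-transitivity: a spherically transitive action is locally
2-transitive iff for every `n ≥ 1` and every vertex `v` of level `n` not the
predecessor of the chosen vertex `u (n+1)`, the common stabiliser of `u (n+1)`
and `v` acts transitively on the descendants of `v`. -/
theorem stmt_8 {X : ℕ → Type} {G : Type} [Group G] (A : TreeAction X G)
    (hsph : SphTrans A) (u : ∀ n : ℕ, Vert X n) :
    LocTwoTrans A ↔
      ∀ n : ℕ, 1 ≤ n → ∀ v : Vert X n, pred (u (n + 1)) ≠ v →
        ∀ w₁ w₂ : Vert X (n + 1), pred w₁ = v → pred w₂ = v →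
          ∃ g : G, A.ρ (n + 1) g (u (n + 1)) = u (n + 1) ∧ A.ρ n g v = v ∧
            A.ρ (n + 1) g w₁ = w₂ := by
  constructor
  · rintro ⟨-, hloc⟩ n - v hv w₁ w₂ hw₁ hw₂
    obtain ⟨g, -, hgv, hgu, hgw⟩ := hloc n _ v hv _ _ w₁ w₂ rfl rfl hw₁ hw₂
    exact ⟨g, hgu, hgv, hgw⟩
  · exact fun hcrit => TreeAction.locTwoTrans_of_stabTransOnChildren hsph
      fun n hn _ _ hxv => TreeAction.stabTransOnChildren_of_sphTrans hsph (hcrit n hn) hxv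
end

section
/- Let G act locally 2-transitively on T, let F have characteristic not dividing the Steinitz order of the closure of G, let v be a vertex, and let π be a nontrivial irreducible F-representation of St_G(v) occurring in the permutation module F[D(v)]. Then the induced representation Ind_{St_G(v)}^G(π) is irreducible. -/
variable {X : ℕ → Type} {G : Type} [Group G]

variable [∀ i, DecidableEq (X i)]

/-- The space of equivariant linear maps between two representations. -/
def repHom {F : Type} [Field F] {G : Type} [Monoid G] {V W : Type}
    [AddCommGroup V] [Module F V] [AddCommGroup W] [Module F W]
    (ρV : Representation F G V) (ρW : Representation F G W) :
    Submodule F (V →ₗ[F] W) where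
  carrier := {φ | ∀ g : G, φ ∘ₗ ρV g = ρW g ∘ₗ φ}
  add_mem' := by
    intro a b ha hb g
    rw [LinearMap.add_comp, LinearMap.comp_add, ha g, hb g]
  zero_mem' := by
    intro g
    simp
  smul_mem' := by
    intro c φ hφ g
    rw [LinearMap.smul_comp, LinearMap.comp_smul, hφ g]

/-- A representation is irreducible if it is nonzero and has no proper nonzero
invariant subspace. -/
def Representation.IsIrred {F : Type} [Field F] {G : Type} [Monoid G] {V : Type}
    [AddCommGroup V] [Module F V] (ρ : Representation F G V) : Prop :=
  Nontrivial V ∧ ∀ W : Submodule F V, (∀ g : G, ∀ x ∈ W, ρ g x ∈ W) → W = ⊥ ∨ W = ⊤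

/-- A representation is trivial if the group acts identically. -/
def Representation.IsTriv {F : Type} [Field F] {G : Type} [Monoid G] {V : Type}
    [AddCommGroup V] [Module F V] (ρ : Representation F G V) : Prop :=
  ∀ (g : G) (x : V), ρ g x = x

/-- `π` occurs in `ρ`, i.e. `π` is isomorphic to a subrepresentation of `ρ`. -/
def Representation.OccursIn {F : Type} [Field F] {G : Type} [Monoid G] {V W : Type}
    [AddCommGroup V] [Module F V] [AddCommGroup W] [Module F W]
    (π : Representation F G V) (ρ : Representation F G W) : Prop :=
  ∃ j : V →ₗ[F] W, Function.Injective j ∧ ∀ (g : G) (x : V), j (π g x) = ρ g (j x)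

/-- The carrier of the representation induced from a representation `π` of a
subgroup `S ≤ G`: the functions `f : G → V` with `f (s * x) = π s (f x)`. -/
def IndCarrier {F : Type} [Field F] {G : Type} [Group G] (S : Subgroup G) {V : Type}
    [AddCommGroup V] [Module F V] (π : Representation F S V) :
    Submodule F (G → V) where
  carrier := {f | ∀ (s : S) (x : G), f (↑s * x) = π s (f x)}
  add_mem' := by
    intro a b ha hb s x
    simp only [Pi.add_apply, ha s x, hb s x, map_add]
  zero_mem' := by
    intro s x
    simp
  smul_mem' := by
    intro c f hf s x
    simp only [Pi.smul_apply, hf s x, map_smul]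

/-- The representation of `G` induced from a representation `π` of a subgroup
`S ≤ G`, by right translation on functions. -/
def IndRep {F : Type} [Field F] {G : Type} [Group G] (S : Subgroup G) {V : Type}
    [AddCommGroup V] [Module F V] (π : Representation F S V) :
    Representation F G (IndCarrier S π) where
  toFun h :=
    { toFun := fun f => ⟨fun x => (f : G → V) (x * h), by
        intro s x
        have := f.2 s (x * h)
        simpa [mul_assoc] using this⟩
      map_add' := fun f g => rfl
      map_smul' := fun c f => rfl }
  map_one' := by
    apply LinearMap.ext
    intro f
    apply Subtype.ext
    funext x
    simp
  map_mul' := by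
    intro a b
    apply LinearMap.ext
    intro f
    apply Subtype.ext
    funext x
    simp [mul_assoc]

/-- The stabiliser of the vertex `v` in `G`. -/
def stab {X : ℕ → Type} {G : Type} [Group G] (A : TreeAction X G) {n : ℕ}
    (v : Vert X n) : Subgroup G where
  carrier := {g | A.ρ n g v = v}
  one_mem' := by simp
  mul_mem' := by
    intro a b ha hb
    simp only [Set.mem_setOf_eq, map_mul, Equiv.Perm.mul_apply] at *
    rw [hb, ha]
  inv_mem' := by
    intro a ha
    simp only [Set.mem_setOf_eq, map_inv] at *
    exact (Equiv.symm_apply_eq _).mpr ha.symm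

/-- The set of descendants of the vertex `v`. -/
def Desc (X : ℕ → Type) {n : ℕ} (v : Vert X n) : Type :=
  {w : Vert X (n + 1) // pred w = v}

/-- The stabiliser of `v` permutes the descendants of `v`. -/
def descPermHom {X : ℕ → Type} {G : Type} [Group G] (A : TreeAction X G) {n : ℕ}
    (v : Vert X n) : stab A v →* Equiv.Perm (Desc X v) where
  toFun g :=
    { toFun := fun w => ⟨A.ρ (n + 1) g.1 w.1, by rw [A.compat, w.2]; exact g.2⟩
      invFun := fun w => ⟨A.ρ (n + 1) g.1⁻¹ w.1, by
        rw [A.compat, w.2]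
        exact (stab A v).inv_mem g.2⟩
      left_inv := fun w => Subtype.ext (by
        simp [← Equiv.Perm.mul_apply, ← map_mul])
      right_inv := fun w => Subtype.ext (by
        show A.ρ (n + 1) g.1 (A.ρ (n + 1) g.1⁻¹ w.1) = w.1
        rw [← Equiv.Perm.mul_apply, ← map_mul]; simp) }
  map_one' := by
    refine Equiv.ext fun w => Subtype.ext ?_
    show A.ρ (n + 1) ((1 : stab A v) : G) w.1 = w.1
    simp [Equiv.Perm.one_apply]
  map_mul' := by
    intro a b
    refine Equiv.ext fun w => Subtype.ext ?_
    show A.ρ (n + 1) ((a * b : stab A v) : G) w.1 = A.ρ (n + 1) a.1 (A.ρ (n + 1) b.1 w.1)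
    simp [Equiv.Perm.mul_apply]

/-- The permutation representation of the stabiliser of `v` on `F[D(v)]`. -/
noncomputable def descRep (F : Type) [Field F] {X : ℕ → Type} {G : Type} [Group G]
    (A : TreeAction X G) {n : ℕ} (v : Vert X n) :
    Representation F (stab A v) (Desc X v →₀ F) :=
  letI : MulAction (stab A v) (Desc X v) := MulAction.compHom _ (descPermHom A v)
  { toFun := fun g => Finsupp.lmapDomain F F (g • ·)
    map_one' := by ext; simp
    map_mul' := fun x y => by ext; simp [mul_smul] }

/-- The permutation representation of `G` on `F[L_n]`. -/
noncomputable def levelRep (F : Type) [Field F] {X : ℕ → Type} {G : Type} [Group G]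
    (A : TreeAction X G) (n : ℕ) : Representation F G (Vert X n →₀ F) :=
  letI : MulAction G (Vert X n) := MulAction.compHom _ (A.ρ n)
  { toFun := fun g => Finsupp.lmapDomain F F (g • ·)
    map_one' := by ext; simp
    map_mul' := fun x y => by ext; simp [mul_smul] }

/-- The subspace of `F[α]` of formal sums whose coefficients sum to zero. -/
noncomputable def zeroSum (F : Type) [Field F] (α : Type) : Submodule F (α →₀ F) :=
  LinearMap.ker (Finsupp.linearCombination F (fun _ : α => (1 : F)))


namespace Representation

section FiniteQuotient

variable {F K M V : Type} [Field F] [Group K] [AddCommGroup M] [Module F M]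
  [AddCommGroup V] [Module F V] {N : Subgroup K} [N.Normal]
  {σ : Representation F K M} {τ : Representation F K V}

theorem isIntertwiningMap_lift_iff (hσ : N ≤ σ.ker) (hτ : N ≤ τ.ker) (f : M →ₗ[F] V) :
    IsIntertwiningMap (QuotientGroup.lift N σ hσ : Representation F (K ⧸ N) M)
      (QuotientGroup.lift N τ hτ) f ↔ σ.IsIntertwiningMap τ f := by
  simp only [isIntertwiningMap_iff]
  exact ⟨fun h k => h k, fun h q => QuotientGroup.induction_on q h⟩

variable [Finite (K ⧸ N)] [NeZero (Nat.card (K ⧸ N) : F)]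

theorem exists_leftInverse_of_ker_le (hσ : N ≤ σ.ker) (hτ : N ≤ τ.ker) {j : V →ₗ[F] M}
    (hj : τ.IsIntertwiningMap σ j) (hinj : Function.Injective j) :
    ∃ P : M →ₗ[F] V, σ.IsIntertwiningMap τ P ∧ P ∘ₗ j = LinearMap.id := by
  set σQ : Representation F (K ⧸ N) M := QuotientGroup.lift N σ hσ
  set τQ : Representation F (K ⧸ N) V := QuotientGroup.lift N τ hτ
  let jQ := IntertwiningMap.equivLinearMapAsModule τQ σQ
    (j.intertwiningMap_of_isIntertwiningMap τQ σQ
      ((isIntertwiningMap_lift_iff hτ hσ j).2 hj).isIntertwining)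
  obtain ⟨P, hP⟩ := IsSemisimpleModule.extension_property jQ hinj LinearMap.id
  let PQ := (IntertwiningMap.equivLinearMapAsModule σQ τQ).symm P
  refine ⟨PQ.toLinearMap, (isIntertwiningMap_lift_iff hσ hτ _).1
    ⟨IntertwiningMap.isIntertwining _ _ PQ⟩, LinearMap.ext fun x => LinearMap.congr_fun hP x⟩

theorem exists_rightInverse_of_ker_le (hσ : N ≤ σ.ker) (hτ : N ≤ τ.ker) {θ : M →ₗ[F] V}
    (hθ : σ.IsIntertwiningMap τ θ) (hsurj : Function.Surjective θ) :
    ∃ s : V →ₗ[F] M, τ.IsIntertwiningMap σ s ∧ θ ∘ₗ s = LinearMap.id := by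
  set σQ : Representation F (K ⧸ N) M := QuotientGroup.lift N σ hσ
  set τQ : Representation F (K ⧸ N) V := QuotientGroup.lift N τ hτ
  let θQ := IntertwiningMap.equivLinearMapAsModule σQ τQ
    (θ.intertwiningMap_of_isIntertwiningMap σQ τQ
      ((isIntertwiningMap_lift_iff hσ hτ θ).2 hθ).isIntertwining)
  obtain ⟨s, hs⟩ := IsSemisimpleModule.lifting_property θQ hsurj LinearMap.id
  let sQ := (IntertwiningMap.equivLinearMapAsModule τQ σQ).symm s
  refine ⟨sQ.toLinearMap, (isIntertwiningMap_lift_iff hτ hσ _).1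
    ⟨IntertwiningMap.isIntertwining _ _ sQ⟩, LinearMap.ext fun x => LinearMap.congr_fun hs x⟩

theorem exists_section_of_ker_le (hσ : N ≤ σ.ker) (hτ : N ≤ τ.ker) {W : Submodule F M}
    (hW : ∀ k, ∀ m ∈ W, σ k m ∈ W) {θ : M →ₗ[F] V} (hθ : σ.IsIntertwiningMap τ θ)
    (hsurj : ∀ x, ∃ m ∈ W, θ m = x) :
    ∃ s : V →ₗ[F] M, τ.IsIntertwiningMap σ s ∧ (∀ x, s x ∈ W) ∧ ∀ x, θ (s x) = x := by
  let σW := Subrepresentation.toRepresentation (⟨W, hW⟩ : Subrepresentation σ)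
  have hσW : N ≤ σW.ker := fun k hk => by
    ext m
    exact congrArg (fun T : Module.End F M => T m) (MonoidHom.mem_ker.1 (hσ hk))
  have hθW : σW.IsIntertwiningMap τ (θ ∘ₗ W.subtype) := ⟨fun k m => hθ.isIntertwining k m⟩
  obtain ⟨s, hs, hθs⟩ := exists_rightInverse_of_ker_le hσW hτ hθW fun x => by
    obtain ⟨m, hm, rfl⟩ := hsurj x
    exact ⟨⟨m, hm⟩, rfl⟩
  refine ⟨W.subtype ∘ₗ s, ⟨fun k x => ?_⟩, fun x => (s x).2, LinearMap.congr_fun hθs⟩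
  simp only [LinearMap.comp_apply, hs.isIntertwining]
  rfl

end FiniteQuotient

theorem ker_le_ker_of_injective {F K M V : Type} [Field F] [Group K] [AddCommGroup M]
    [Module F M] [AddCommGroup V] [Module F V] {σ : Representation F K M}
    {τ : Representation F K V} {j : V →ₗ[F] M} (hj : τ.IsIntertwiningMap σ j)
    (hinj : Function.Injective j) : σ.ker ≤ τ.ker := fun k hk => by
  ext x
  apply hinj
  rw [hj.isIntertwining, MonoidHom.mem_ker.1 hk, Module.End.one_apply, Module.End.one_apply]

end Representation

theorem neZero_card_quotient_subgroupOf_ker {F G P : Type} [Field F] [Group G] [Group P]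
    (f : G →* P) (H : Subgroup G) (h : ¬ ringChar F ∣ Nat.card f.range) :
    NeZero (Nat.card (H ⧸ f.ker.subgroupOf H) : F) := by
  refine ⟨fun h0 => h ?_⟩
  rw [← Subgroup.index_ker]
  exact ((CharP.cast_eq_zero_iff F _ _).1 h0).trans (Subgroup.relIndex_dvd_index_of_normal _ _)

section ZeroSum

variable {F : Type} [Field F]

/-- Coefficient invariance forces every matrix entry of `Φ` to be the same constant, so `Φ`
factors through the augmentation. -/
theorem map_eq_zero_of_mem_zeroSum {H α β : Type} (a : H → Equiv.Perm α) (b : H → Equiv.Perm β)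
    (htrans : ∀ (a₁ a₂ : α) (b₁ b₂ : β), ∃ h, a h a₁ = a₂ ∧ b h b₁ = b₂)
    {Φ : (α →₀ F) →ₗ[F] (β →₀ F)}
    (hΦ : ∀ h z, Φ (z.mapDomain (a h)) = (Φ z).mapDomain (b h))
    {z : α →₀ F} (hz : z ∈ zeroSum F α) : Φ z = 0 := by
  have hconst : ∀ (a₁ a₂ : α) (b₁ b₂ : β),
      Φ (Finsupp.single a₁ 1) b₁ = Φ (Finsupp.single a₂ 1) b₂ := by
    intro a₁ a₂ b₁ b₂
    obtain ⟨h, rfl, rfl⟩ := htrans a₁ a₂ b₁ b₂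
    rw [← Finsupp.mapDomain_single, hΦ, Finsupp.mapDomain_apply (b h).injective]
  ext b₀
  have hlin : (Finsupp.lapply b₀ ∘ₗ Φ) =
      Finsupp.linearCombination F (fun a => Φ (Finsupp.single a 1) b₀) := by
    ext a
    simp
  rcases isEmpty_or_nonempty α with hα | ⟨⟨a₀⟩⟩
  · simp [Subsingleton.elim z 0]
  calc Φ z b₀ = Finsupp.linearCombination F (fun a => Φ (Finsupp.single a 1) b₀) z :=
        LinearMap.congr_fun hlin z
    _ = Finsupp.linearCombination F (fun _ => (1 : F)) z * Φ (Finsupp.single a₀ 1) b₀ := by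
        simp only [Finsupp.linearCombination_apply, Finsupp.sum, Finset.sum_mul, smul_eq_mul,
          mul_one, hconst _ a₀ b₀ b₀]
    _ = 0 := by rw [LinearMap.mem_ker.1 hz, zero_mul]

end ZeroSum

section Induced

variable {F G V : Type} [Field F] [Group G] {S : Subgroup G} [AddCommGroup V] [Module F V]
  {π : Representation F S V}

theorem indRep_apply (g : G) (f : IndCarrier S π) (y : G) :
    (IndRep S π g f : G → V) y = (f : G → V) (y * g) :=
  rfl

theorem IndCarrier.apply_mul (f : IndCarrier S π) (s : S) (y : G) :
    (f : G → V) (s * y) = π s ((f : G → V) y) :=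
  f.2 s y

variable (π) in
open Classical in
noncomputable def indSingle (x : V) : IndCarrier S π :=
  ⟨fun y => if h : y ∈ S then π ⟨y, h⟩ x else 0, fun s y => by
    dsimp only
    by_cases hy : y ∈ S
    · rw [dif_pos hy, dif_pos (S.mul_mem s.2 hy), ← Module.End.mul_apply, ← map_mul]
      rfl
    · rw [dif_neg hy, dif_neg ((S.mul_mem_cancel_left s.2).not.2 hy), map_zero]⟩

theorem indSingle_apply_of_mem (x : V) {y : G} (hy : y ∈ S) :
    (indSingle π x : G → V) y = π ⟨y, hy⟩ x :=
  dif_pos hy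

theorem indSingle_apply_of_notMem (x : V) {y : G} (hy : y ∉ S) :
    (indSingle π x : G → V) y = 0 :=
  dif_neg hy

theorem indSingle_apply_one (x : V) : (indSingle π x : G → V) 1 = x := by
  rw [indSingle_apply_of_mem x S.one_mem]
  exact LinearMap.congr_fun (map_one π) x

theorem nontrivial_indCarrier [Nontrivial V] : Nontrivial (IndCarrier S π) :=
  (Function.LeftInverse.injective (g := fun f : IndCarrier S π => (f : G → V) 1)
    (indSingle_apply_one (π := π))).nontrivial

theorem eq_indSingle {f : IndCarrier S π} (hf : ∀ g ∉ S, (f : G → V) g = 0) :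
    f = indSingle π ((f : G → V) 1) := by
  ext y
  by_cases hy : y ∈ S
  · rw [indSingle_apply_of_mem _ hy, ← IndCarrier.apply_mul, mul_one]
  · rw [hf y hy, indSingle_apply_of_notMem _ hy]

/-- Every `f` in the induced module is `∑ c, c.out • indSingle (f c.out⁻¹)` over `c : G ⧸ S`. -/
theorem eq_top_of_indSingle_mem [Finite (G ⧸ S)] {W : Submodule F (IndCarrier S π)}
    (hW : ∀ g, ∀ f ∈ W, IndRep S π g f ∈ W) (hsingle : ∀ x, indSingle π x ∈ W) : W = ⊤ := by
  have := Fintype.ofFinite (G ⧸ S)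
  refine Submodule.eq_top_iff'.2 fun f => ?_
  suffices hf : f = ∑ c : G ⧸ S, IndRep S π c.out (indSingle π ((f : G → V) c.out⁻¹)) by
    rw [hf]
    exact W.sum_mem fun c _ => hW _ _ (hsingle _)
  ext y
  rw [Submodule.coe_sum, Finset.sum_apply, Finset.sum_eq_single (QuotientGroup.mk y⁻¹)]
  · obtain ⟨s, hout⟩ := QuotientGroup.mk_out_eq_mul S y⁻¹
    have hys : y * (QuotientGroup.mk y⁻¹ : G ⧸ S).out ∈ S := by simp [hout]
    rw [indRep_apply, indSingle_apply_of_mem _ hys, ← IndCarrier.apply_mul]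
    simp
  · intro c _ hc
    rw [indRep_apply, indSingle_apply_of_notMem]
    refine fun hyc => hc ?_
    rw [← QuotientGroup.out_eq' c, QuotientGroup.eq]
    simpa using S.inv_mem hyc
  · simp

theorem ker_le_ker_indRep {N : Subgroup G} [N.Normal] (hNS : N ≤ S)
    (hπ : N.subgroupOf S ≤ π.ker) : N ≤ (IndRep S π).ker := by
  intro t ht
  ext f y : 3
  have hconj : y * t * y⁻¹ ∈ N := ‹N.Normal›.conj_mem t ht y
  calc (f : G → V) (y * t) = (f : G → V) ((⟨y * t * y⁻¹, hNS hconj⟩ : S) * y) := by simp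
    _ = (f : G → V) y := by
      rw [IndCarrier.apply_mul, MonoidHom.mem_ker.1 (hπ (x := ⟨_, hNS hconj⟩) hconj)]
      rfl

theorem apply_isIntertwiningMap_conj {s : V →ₗ[F] IndCarrier S π}
    (hs : π.IsIntertwiningMap ((IndRep S π).comp S.subtype) s) (g : G) {t : G} (ht : t ∈ S)
    (ht' : g * t * g⁻¹ ∈ S) (x : V) :
    (s (π ⟨t, ht⟩ x) : G → V) g = π ⟨g * t * g⁻¹, ht'⟩ ((s x : G → V) g) := by
  rw [hs.isIntertwining, ← IndCarrier.apply_mul]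
  simp only [MonoidHom.comp_apply, indRep_apply, Subgroup.subtype_apply]
  group

theorem exists_ne_zero_eval_one_of_ne_bot {W : Submodule F (IndCarrier S π)}
    (hW : ∀ g, ∀ f ∈ W, IndRep S π g f ∈ W) (hWne : W ≠ ⊥) :
    ∃ f ∈ W, (f : G → V) 1 ≠ 0 := by
  obtain ⟨f, hf, hf0⟩ := (Submodule.ne_bot_iff W).1 hWne
  obtain ⟨y, hy⟩ : ∃ y, (f : G → V) y ≠ 0 := by
    by_contra! h
    exact hf0 (Subtype.ext (funext h))
  exact ⟨IndRep S π y f, hW y f hf, by rwa [indRep_apply, one_mul]⟩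

theorem exists_section_of_ne_bot {N : Subgroup S} [N.Normal] [Finite (S ⧸ N)]
    [NeZero (Nat.card (S ⧸ N) : F)] (hNπ : N ≤ π.ker)
    (hNInd : N ≤ ((IndRep S π).comp S.subtype).ker) (hirr : π.IsIrred)
    {W : Submodule F (IndCarrier S π)} (hW : ∀ g, ∀ f ∈ W, IndRep S π g f ∈ W) (hWne : W ≠ ⊥) :
    ∃ s : V →ₗ[F] IndCarrier S π, π.IsIntertwiningMap ((IndRep S π).comp S.subtype) s ∧
      (∀ x, s x ∈ W) ∧ ∀ x, (s x : G → V) 1 = x := by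
  let θ : IndCarrier S π →ₗ[F] V := LinearMap.proj 1 ∘ₗ (IndCarrier S π).subtype
  have hθ : Representation.IsIntertwiningMap ((IndRep S π).comp S.subtype) π θ := ⟨fun t f => by
    show (f : G → V) (1 * t) = π t ((f : G → V) 1)
    rw [one_mul, ← IndCarrier.apply_mul, mul_one]⟩
  have hsurj : W.map θ = ⊤ := by
    refine (hirr.2 _ ?_).resolve_left ?_
    · rintro t _ ⟨f, hf, rfl⟩
      exact ⟨_, hW t f hf, hθ.isIntertwining t f⟩
    · obtain ⟨f, hf, hf1⟩ := exists_ne_zero_eval_one_of_ne_bot hW hWne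
      exact (Submodule.ne_bot_iff _).2 ⟨_, ⟨f, hf, rfl⟩, hf1⟩
  exact Representation.exists_section_of_ker_le hNInd hNπ (fun t => hW t) hθ fun x =>
    (hsurj.symm ▸ Submodule.mem_top : x ∈ W.map θ)

end Induced

section Tree

variable {X : ℕ → Type} {G : Type} [Group G] (A : TreeAction X G) {n : ℕ}

theorem pred_snoc (u : Vert X n) (x : X n) :
    pred (Fin.snoc (α := fun i : Fin (n + 1) => X i) u x : Vert X (n + 1)) = u := by
  funext i
  exact Fin.snoc_castSucc (α := fun i : Fin (n + 1) => X i) ..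

theorem ker_succ_le_ker [Nonempty (X n)] : (A.ρ (n + 1)).ker ≤ (A.ρ n).ker := by
  intro g hg
  obtain ⟨x⟩ := ‹Nonempty (X n)›
  ext u : 1
  simpa [MonoidHom.mem_ker.1 hg, pred_snoc] using (A.compat n g (Fin.snoc u x)).symm

theorem ker_le_stab (v : Vert X n) : (A.ρ n).ker ≤ stab A v := fun g hg => by
  show A.ρ n g v = v
  rw [MonoidHom.mem_ker.1 hg]
  rfl

theorem mem_stab_iff {v : Vert X n} {g : G} : g ∈ stab A v ↔ A.ρ n g v = v := Iff.rfl

theorem conj_mem_stab_iff {v : Vert X n} {g t : G} :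
    g * t * g⁻¹ ∈ stab A v ↔ t ∈ stab A (A.ρ n g⁻¹ v) := by
  simp only [mem_stab_iff, map_mul, map_inv, Equiv.Perm.mul_apply]
  exact (Equiv.eq_symm_apply _).symm

section Desc

variable {F : Type} [Field F] {v : Vert X n}

theorem descRep_apply (s : stab A v) (z : Desc X v →₀ F) :
    descRep F A v s z = z.mapDomain (descPermHom A v s) :=
  rfl

theorem ker_subgroupOf_le_ker_descRep :
    (A.ρ (n + 1)).ker.subgroupOf (stab A v) ≤ (descRep F A v).ker := by
  intro t ht
  have hperm : descPermHom A v t = 1 := Equiv.ext fun w => Subtype.ext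
    (show A.ρ (n + 1) t w.1 = w.1 by rw [Subgroup.mem_subgroupOf.1 ht]; rfl)
  refine LinearMap.ext fun z => ?_
  show descRep F A v _ z = z
  rw [descRep_apply, hperm]
  exact Finsupp.mapDomain_id

variable {V : Type} [AddCommGroup V] [Module F V] {π : Representation F (stab A v) V}
  {j : V →ₗ[F] (Desc X v →₀ F)}

theorem nonempty_of_injective [Nontrivial V] (hinj : Function.Injective j) : Nonempty (X n) := by
  by_contra h
  have : IsEmpty (Desc X v) := ⟨fun w => (not_nonempty_iff.1 h).false (w.1 (Fin.last n))⟩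
  exact not_subsingleton V hinj.subsingleton

theorem mem_zeroSum_of_isIntertwiningMap (hirr : π.IsIrred) (hnt : ¬ π.IsTriv)
    (hj : π.IsIntertwiningMap (descRep F A v) j) (x : V) : j x ∈ zeroSum F (Desc X v) := by
  set L := Finsupp.linearCombination F (fun _ : Desc X v => (1 : F)) ∘ₗ j
  have hL : ∀ s y, L (π s y) = L y := fun s y => by
    simp only [L, LinearMap.comp_apply, hj.isIntertwining, descRep_apply,
      Finsupp.linearCombination_mapDomain]
    rfl
  rcases hirr.2 (LinearMap.ker L) fun s y hy => by rwa [LinearMap.mem_ker, hL] with hbot | htop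
  · refine absurd (fun s y => ?_) hnt
    have : π s y - y ∈ LinearMap.ker L := by rw [LinearMap.mem_ker, map_sub, hL, sub_self]
    rwa [hbot, Submodule.mem_bot, sub_eq_zero] at this
  · have : x ∈ LinearMap.ker L := htop ▸ Submodule.mem_top
    exact this

end Desc

def conjStab (g : G) (v : Vert X n) : ↥(stab A v ⊓ stab A (A.ρ n g⁻¹ v)) →* stab A v where
  toFun t := ⟨g * t * g⁻¹, (conj_mem_stab_iff A).2 (Subgroup.mem_inf.1 t.2).2⟩
  map_one' := by ext; simp
  map_mul' a b := by ext; simp [mul_assoc]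

theorem exists_descPerm_inclusion_conjStab (h2 : LocTwoTrans A) {v : Vert X n} {g : G}
    (hg : g ∉ stab A v) (a₁ a₂ b₁ b₂ : Desc X v) :
    ∃ t, descPermHom A v (Subgroup.inclusion inf_le_left t) a₁ = a₂ ∧
      descPermHom A v (conjStab A g v t) b₁ = b₂ := by
  set u := A.ρ n g⁻¹ v
  have hvu : v ≠ u := fun h => hg (by rw [mem_stab_iff]; nth_rw 1 [h]; simp [u])
  have hpred : ∀ b : Desc X v, pred (A.ρ (n + 1) g⁻¹ b.1) = u := fun b => by rw [A.compat, b.2]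
  obtain ⟨t, htv, htu, ha, hb⟩ := h2.2 n v u hvu a₁.1 a₂.1 _ _ a₁.2 a₂.2 (hpred b₁) (hpred b₂)
  refine ⟨⟨t, htv, htu⟩, Subtype.ext ha, Subtype.ext ?_⟩
  show A.ρ (n + 1) (g * t * g⁻¹) b₁.1 = b₂.1
  simp only [map_mul, Equiv.Perm.mul_apply, hb]
  simp

section Vanishing

variable {F : Type} [Field F] {v : Vert X n} {V : Type} [AddCommGroup V] [Module F V]
  {π : Representation F (stab A v) V} {j : V →ₗ[F] (Desc X v →₀ F)}

theorem eq_zero_of_isIntertwiningMap_conjStab [∀ i, Finite (X i)] (h2 : LocTwoTrans A)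
    (hchar : ¬ ringChar F ∣ Nat.card (A.ρ (n + 1)).range) (hirr : π.IsIrred) (hnt : ¬ π.IsTriv)
    (hj : π.IsIntertwiningMap (descRep F A v) j) (hinj : Function.Injective j)
    {g : G} (hg : g ∉ stab A v) {φ : V →ₗ[F] V}
    (hφ : Representation.IsIntertwiningMap (π.comp (Subgroup.inclusion inf_le_left))
      (π.comp (conjStab A g v)) φ) :
    φ = 0 := by
  set H := stab A v ⊓ stab A (A.ρ n g⁻¹ v)
  set ι : H →* stab A v := Subgroup.inclusion inf_le_left
  have := neZero_card_quotient_subgroupOf_ker (A.ρ (n + 1)) H hchar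
  have hjH : Representation.IsIntertwiningMap (π.comp ι) ((descRep F A v).comp ι) j :=
    ⟨fun t => hj.isIntertwining (ι t)⟩
  have hker : (A.ρ (n + 1)).ker.subgroupOf H ≤ ((descRep F A v).comp ι).ker :=
    fun t ht => ker_subgroupOf_le_ker_descRep A (x := ι t) ht
  obtain ⟨P, hP, hPj⟩ := Representation.exists_leftInverse_of_ker_le hker
    (hker.trans (Representation.ker_le_ker_of_injective hjH hinj)) hjH hinj
  have hΦ : ∀ z ∈ zeroSum F (Desc X v), j (φ (P z)) = 0 := fun z hz =>
    map_eq_zero_of_mem_zeroSum (Φ := j ∘ₗ φ ∘ₗ P) _ _ (exists_descPerm_inclusion_conjStab A h2 hg)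
      (fun t z => by
        have hPt := hP.isIntertwining t z
        have hφt := hφ.isIntertwining t (P z)
        simp only [MonoidHom.comp_apply] at hPt hφt
        change j (φ (P (descRep F A v (ι t) z))) = descRep F A v (conjStab A g v t) (j (φ (P z)))
        rw [hPt, hφt, hj.isIntertwining]) hz
  ext x
  apply hinj
  have hPx : P (j x) = x := LinearMap.congr_fun hPj x
  simpa [hPx] using hΦ (j x) (mem_zeroSum_of_isIntertwiningMap A hirr hnt hj x)

end Vanishing

end Tree

/-- If `G` acts locally 2-transitively on the tree and `char F` does not divide the
Steinitz order of the closure of `G` (i.e. the order of any of the finite images of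
the level actions), then for every nontrivial irreducible representation `π` of the
stabiliser of a vertex `v` occurring in the permutation module `F[D(v)]`, the
induced representation `Ind_{St(v)}^G π` is irreducible. -/
theorem stmt_9 {X : ℕ → Type} [∀ i, Fintype (X i)] {G : Type} [Group G]
    (A : TreeAction X G) (F : Type) [Field F]
    (hchar : ∀ n : ℕ, ¬ (ringChar F ∣ Nat.card (A.ρ n).range))
    (h2 : LocTwoTrans A) {n : ℕ} (v : Vert X n)
    (V : Type) [AddCommGroup V] [Module F V]
    (π : Representation F (stab A v) V)
    (hirr : π.IsIrred) (hnt : ¬ π.IsTriv)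
    (hocc : π.OccursIn (descRep F A v)) :
    (IndRep (stab A v) π).IsIrred := by
  obtain ⟨j, hinj, hj⟩ := hocc
  replace hj : π.IsIntertwiningMap (descRep F A v) j := ⟨hj⟩
  have := hirr.1
  have := nonempty_of_injective hinj
  have := neZero_card_quotient_subgroupOf_ker (A.ρ (n + 1)) (stab A v) (hchar (n + 1))
  have := Subgroup.finiteIndex_of_le (ker_le_stab A v)
  have hNπ : (A.ρ (n + 1)).ker.subgroupOf (stab A v) ≤ π.ker :=
    (ker_subgroupOf_le_ker_descRep A (F := F)).trans
      (Representation.ker_le_ker_of_injective hj hinj)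
  have hNInd : (A.ρ (n + 1)).ker.subgroupOf (stab A v) ≤
      ((IndRep (stab A v) π).comp (stab A v).subtype).ker := fun t ht =>
    ker_le_ker_indRep ((ker_succ_le_ker A).trans (ker_le_stab A v)) hNπ ht
  refine ⟨nontrivial_indCarrier, fun W hW => or_iff_not_imp_left.2 fun hWne => ?_⟩
  obtain ⟨s, hs, hsW, hs1⟩ := exists_section_of_ne_bot hNπ hNInd hirr hW hWne
  refine eq_top_of_indSingle_mem hW fun x => ?_
  have hvanish : ∀ g ∉ stab A v, (s x : G → V) g = 0 := fun g hg =>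
    LinearMap.congr_fun (eq_zero_of_isIntertwiningMap_conjStab A h2 (hchar _) hirr hnt hj hinj hg
      (φ := LinearMap.proj g ∘ₗ (IndCarrier _ π).subtype ∘ₗ s)
      ⟨fun t y => apply_isIntertwiningMap_conj hs g _ _ y⟩) x
  rw [← hs1 x, ← eq_indSingle hvanish]
  exact hsW x
end

section
/- Let H be a finite group acting transitively on a finite set X, and suppose H contains an abelian subgroup A that acts transitively on X. Then the complex permutation representation of H on ℂ[X] is multiplicity-free. -/
/-! The commuting operators `π a`, `a ∈ A`, have a common eigenvector `v` in the irreducible `V`.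
Its images under two embeddings are eigenfunctions on `X` for the same character of `A`, and
transitivity of `A` makes such an eigenfunction determined by its value at a single point. Hence
the two embeddings are proportional at `v`, and by irreducibility they are proportional. -/

open Module Set MonoidAlgebra

theorem Module.End.exists_ne_zero_forall_apply_eq_smul_of_commute {K V : Type*} [Field K]
    [IsAlgClosed K] [AddCommGroup V] [Module K V] [FiniteDimensional K V] [Nontrivial V]
    (S : Set (End K V)) (hS : ∀ f ∈ S, ∀ g ∈ S, Commute f g) :
    ∃ v ≠ 0, ∀ f ∈ S, ∃ μ : K, f v = μ • v := by
  induction hn : finrank K V using Nat.strong_induction_on generalizing V with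
  | _ n ih =>
  by_cases hscalar : ∀ f ∈ S, ∃ μ : K, f.eigenspace μ = ⊤
  · obtain ⟨v, hv⟩ := exists_ne (0 : V)
    refine ⟨v, hv, fun f hf => ?_⟩
    obtain ⟨μ, hμ⟩ := hscalar f hf
    exact ⟨μ, End.mem_eigenspace_iff.mp (hμ ▸ Submodule.mem_top)⟩
  push Not at hscalar
  obtain ⟨f, hf, hproper⟩ := hscalar
  obtain ⟨μ, hμ⟩ := End.exists_eigenvalue f
  -- `f` is not scalar, so its eigenspace is proper and `S`-stable: recurse into it.
  set E := f.eigenspace μ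
  have hE : ∀ g ∈ S, MapsTo g E E := fun g hg =>
    End.mapsTo_genEigenspace_of_comm (hS f hf g hg) μ 1
  have : Nontrivial E := Submodule.nontrivial_iff_ne_bot.mpr hμ
  obtain ⟨w, hw, hwS⟩ := ih (finrank K E) (hn ▸ Submodule.finrank_lt (hproper μ)) (V := E)
    (range fun g : S => (g : End K V).restrict (hE g g.2))
    (by
      rintro _ ⟨g, rfl⟩ _ ⟨g', rfl⟩
      exact LinearMap.restrict_commute (hS g g.2 g' g'.2) _ _) rfl
  refine ⟨w, by simpa using hw, fun g hg => ?_⟩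
  obtain ⟨ν, hν⟩ := hwS _ ⟨⟨g, hg⟩, rfl⟩
  exact ⟨ν, congrArg Subtype.val hν⟩

theorem Representation.IsIrred.eq_zero_of_apply_eq_zero {F G V : Type} {W : Type*} [Field F]
    [Monoid G] [AddCommGroup V] [Module F V] [AddCommGroup W] [Module F W]
    {π : Representation F G V} (hπ : π.IsIrred) (T : V →ₗ[F] W)
    (hT : ∀ g x, T x = 0 → T (π g x) = 0) {v : V} (hv : v ≠ 0) (hTv : T v = 0) : T = 0 := by
  refine LinearMap.ker_eq_top.mp ((hπ.2 _ hT).resolve_left fun hbot => hv ?_)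
  simpa [hbot] using (LinearMap.mem_ker.mpr hTv : v ∈ LinearMap.ker T)

theorem mul_eq_mul_of_forall_mul_apply_smul {M X K : Type*} [SMul M X] [CommSemiring K]
    {S : Set M} (hS : ∀ x y : X, ∃ a ∈ S, a • x = y) (χ : M → K) {f g : X → K}
    (hf : ∀ a ∈ S, ∀ x, χ a * f (a • x) = f x) (hg : ∀ a ∈ S, ∀ x, χ a * g (a • x) = g x)
    (x₀ x : X) : f x₀ * g x = g x₀ * f x := by
  obtain ⟨a, ha, rfl⟩ := hS x x₀
  rw [← hf a ha x, ← hg a ha x]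
  ring

theorem Representation.coeff_ofMulAction_ofCoeff {K G X : Type*} [CommSemiring K] [Monoid G]
    [MulAction G X] (g : G) (f : X →₀ K) :
    (Representation.ofMulAction K G X g (ofCoeff f)).coeff = Finsupp.lmapDomain K K (g • ·) f :=
  rfl

theorem range_le_range_of_isIrred_of_commute {K G V : Type} {X : Type*} [Field K] [IsAlgClosed K]
    [Group G] [MulAction G X] [Finite X] [AddCommGroup V] [Module K V]
    {π : Representation K G V} (hπ : π.IsIrred) {S : Set G}
    (hScomm : ∀ a ∈ S, ∀ b ∈ S, a * b = b * a) (hStrans : ∀ x y : X, ∃ a ∈ S, a • x = y)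
    {j₁ j₂ : V →ₗ[K] X →₀ K} (h₂ : Function.Injective j₂)
    (he₁ : ∀ g x, j₁ (π g x) = (Representation.ofMulAction K G X g (ofCoeff (j₁ x))).coeff)
    (he₂ : ∀ g x, j₂ (π g x) = (Representation.ofMulAction K G X g (ofCoeff (j₂ x))).coeff) :
    LinearMap.range j₁ ≤ LinearMap.range j₂ := by
  have : FiniteDimensional K V := FiniteDimensional.of_injective j₂ h₂
  have : Nontrivial V := hπ.1
  obtain ⟨v, hv, hvS⟩ := End.exists_ne_zero_forall_apply_eq_smul_of_commute (π '' S) <| by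
    rintro _ ⟨a, ha, rfl⟩ _ ⟨b, hb, rfl⟩
    exact Commute.map (hScomm a ha b hb) π
  choose! χ hχ using fun a (ha : a ∈ S) => hvS (π a) (mem_image_of_mem π ha)
  have eigen : ∀ j : V →ₗ[K] X →₀ K,
      (∀ g x, j (π g x) = (Representation.ofMulAction K G X g (ofCoeff (j x))).coeff) →
      ∀ a ∈ S, ∀ y, χ a * j v (a • y) = j v y := by
    intro j hj a ha y
    rw [← smul_eq_mul, ← Finsupp.smul_apply, ← map_smul, ← hχ a ha, hj,
      Representation.coeff_ofMulAction_ofCoeff]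
    exact Finsupp.mapDomain_apply (MulAction.injective a) _ y
  obtain ⟨x₀, hx₀⟩ : ∃ x₀, j₂ v x₀ ≠ 0 := by
    simpa [Finsupp.ne_iff] using (map_ne_zero_iff j₂ h₂).mpr hv
  have hT : j₂ v x₀ • j₁ = j₁ v x₀ • j₂ := by
    refine sub_eq_zero.mp (hπ.eq_zero_of_apply_eq_zero _ (fun g x hx => ?_) hv ?_)
    · simp only [LinearMap.sub_apply, LinearMap.smul_apply, he₁, he₂,
        Representation.coeff_ofMulAction_ofCoeff, ← map_smul, ← map_sub] at hx ⊢
      rw [hx, map_zero]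
    · ext x
      simpa [sub_eq_zero, mul_comm] using
        mul_eq_mul_of_forall_mul_apply_smul hStrans χ (eigen j₂ he₂) (eigen j₁ he₁) x₀ x
  calc LinearMap.range j₁ = LinearMap.range (j₂ v x₀ • j₁) := (LinearMap.range_smul _ _ hx₀).symm
    _ ≤ LinearMap.range j₂ := hT ▸ LinearMap.range_smul_le_range _ _

theorem stmt_14_general (H X : Type) [Group H] [Fintype X] [MulAction H X]
    (A : Subgroup H) (habel : ∀ a ∈ A, ∀ b ∈ A, a * b = b * a)
    (hAtrans : ∀ x y : X, ∃ g ∈ A, g • x = y)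
    (V : Type) [AddCommGroup V] [Module ℂ V] (π : Representation ℂ H V)
    (hirr : π.IsIrred)
    (j₁ j₂ : V →ₗ[ℂ] (X →₀ ℂ))
    (h₁ : Function.Injective j₁) (h₂ : Function.Injective j₂)
    (he₁ : ∀ (g : H) (x : V), j₁ (π g x) = (Representation.ofMulAction ℂ H X g (MonoidAlgebra.ofCoeff (j₁ x))).coeff)
    (he₂ : ∀ (g : H) (x : V), j₂ (π g x) = (Representation.ofMulAction ℂ H X g (MonoidAlgebra.ofCoeff (j₂ x))).coeff) :
    LinearMap.range j₁ = LinearMap.range j₂ :=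
  le_antisymm (range_le_range_of_isIrred_of_commute hirr habel hAtrans h₂ he₁ he₂)
    (range_le_range_of_isIrred_of_commute hirr habel hAtrans h₁ he₂ he₁)

/-- If a finite group `H` acts transitively on a finite set `X` and contains an
abelian subgroup acting transitively on `X`, then the complex permutation
representation `ℂ[X]` is multiplicity-free: any two equivariant embeddings of an
irreducible representation into `ℂ[X]` have the same image. -/
theorem stmt_14 (H X : Type) [Group H] [Fintype H] [Fintype X] [MulAction H X]
    (htrans : MulAction.IsPretransitive H X)
    (A : Subgroup H) (habel : ∀ a ∈ A, ∀ b ∈ A, a * b = b * a)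
    (hAtrans : ∀ x y : X, ∃ g ∈ A, g • x = y)
    (V : Type) [AddCommGroup V] [Module ℂ V] (π : Representation ℂ H V)
    (hirr : π.IsIrred)
    (j₁ j₂ : V →ₗ[ℂ] (X →₀ ℂ))
    (h₁ : Function.Injective j₁) (h₂ : Function.Injective j₂)
    (he₁ : ∀ (g : H) (x : V), j₁ (π g x) = (Representation.ofMulAction ℂ H X g (MonoidAlgebra.ofCoeff (j₁ x))).coeff)
    (he₂ : ∀ (g : H) (x : V), j₂ (π g x) = (Representation.ofMulAction ℂ H X g (MonoidAlgebra.ofCoeff (j₂ x))).coeff) :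
    LinearMap.range j₁ = LinearMap.range j₂ :=
  stmt_14_general H X A habel hAtrans V π hirr j₁ j₂ h₁ h₂ he₁ he₂
end
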